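/- arXiv:1304.0181 — 2 statements merged into one kernel-verified Lean document; each statement's English description precedes it below -/
import Mathlib

section
/- Radical parallelism on the projective line over a ring R is the equality relation if and only if the Jacobson radical of R is zero. -/
open Matrix

/-- A pair `(a, b)` is admissible if it is the first row of an invertible 2×2 matrix. -/
def Admissible {R : Type*} [Ring R] (a b : R) : Prop :=
  ∃ M : Matrix (Fin 2) (Fin 2) R, IsUnit M ∧ M 0 0 = a ∧ M 0 1 = b

/-- The point `R(a,b)` of the projective line over `R`. -/
def pt (R : Type*) [Ring R] (a b : R) : Submodule R (Fin 2 → R) :=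
  Submodule.span R {![a, b]}

/-- The projective line over `R`. -/
def ProjLine (R : Type*) [Ring R] : Set (Submodule R (Fin 2 → R)) :=
  {p | ∃ a b : R, Admissible a b ∧ p = pt R a b}

/-- Two points are distant iff representing admissible pairs form an invertible matrix. -/
def Distant {R : Type*} [Ring R] (p q : Submodule R (Fin 2 → R)) : Prop :=
  ∃ a b c d : R, p = pt R a b ∧ q = pt R c d ∧ IsUnit (!![a, b; c, d])

/-- `p` is radically parallel to `q`: every point distant to `p` is distant to `q`. -/
def RadParallel {R : Type*} [Ring R] (p q : Submodule R (Fin 2 → R)) : Prop :=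
  ∀ x ∈ ProjLine R, Distant x p → Distant x q

/-!
Invertibility of a 2×2 matrix over `R` reduces, by row and column operations, to invertibility
of a Schur complement: `[1 r; a b]` is invertible iff `b - a r` is a unit. Since representatives of
a point differ by a unit factor, distance of two points is invertibility of the matrix of any
representatives.

If `r` lies in the Jacobson radical, a point `R(a, b)` distant to `R(1, 0)` has `b` a unit, hence
`b - a r` is a unit and `R(a, b)` is distant to `R(1, r)`: so `R(1, 0) ∥ R(1, r)`, and equality of
these points forces `r = 0`. Conversely write `q = R((g, h) M)` for `p = R(a, b)` and an invertible
`M = [a b; c d]`. If `p ∥ q`, testing against the points `R(t a + c, t b + d)` distant to `p` shows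
that `g - h t` is a unit for every `t`; this puts `h` in the Jacobson radical, so `h = 0` and
`q = R(g a, g b) = p`.
-/

section Jacobson

variable {R : Type*} [Ring R]

theorem isUnit_one_add_mul_comm {a b : R} (h : IsUnit (1 + a * b)) : IsUnit (1 + b * a) := by
  obtain ⟨u, hu⟩ := h
  refine isUnit_iff_exists.mpr ⟨1 - b * ↑u⁻¹ * a, ?_, ?_⟩
  · calc (1 + b * a) * (1 - b * ↑u⁻¹ * a) = 1 + b * a - b * ((1 + a * b) * ↑u⁻¹) * a := by
          noncomm_ring
      _ = 1 := by rw [← hu, u.mul_inv]; noncomm_ring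
  · calc (1 - b * ↑u⁻¹ * a) * (1 + b * a) = 1 + b * a - b * (↑u⁻¹ * (1 + a * b)) * a := by
          noncomm_ring
      _ = 1 := by rw [← hu, u.inv_mul]; noncomm_ring

theorem Ideal.exists_mul_one_add_mul_eq_one_of_mem_jacobson_bot {x : R}
    (hx : x ∈ (⊥ : Ideal R).jacobson) (y : R) : ∃ z, z * (1 + y * x) = 1 := by
  obtain ⟨z, hz⟩ := Ideal.mem_jacobson_iff.mp hx y
  rw [Ideal.mem_bot, sub_eq_zero, add_comm, mul_assoc] at hz
  exact ⟨z, by rwa [mul_add, mul_one]⟩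

theorem Ideal.mem_jacobson_bot_iff_forall_isUnit_one_add_mul {x : R} :
    x ∈ (⊥ : Ideal R).jacobson ↔ ∀ y, IsUnit (1 + y * x) := by
  refine ⟨fun hx y => ?_, fun h => Ideal.mem_jacobson_iff.mpr fun y => ?_⟩
  · obtain ⟨z, hz⟩ := exists_mul_one_add_mul_eq_one_of_mem_jacobson_bot hx y
    obtain ⟨w, hw⟩ := exists_mul_one_add_mul_eq_one_of_mem_jacobson_bot hx (-(z * y))
    have hz_eq : z = 1 + -(z * y) * x := by
      calc z = z * (1 + y * x) - z * y * x := by noncomm_ring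
        _ = 1 + -(z * y) * x := by rw [hz]; noncomm_ring
    have hz' : IsUnit z := isUnit_iff_exists_and_exists.mpr ⟨⟨_, hz⟩, ⟨w, hz_eq ▸ hw⟩⟩
    exact hz'.mul_left_iff.mp (by rw [hz]; exact isUnit_one)
  · obtain ⟨u, hu⟩ := h y
    refine ⟨↑u⁻¹, ?_⟩
    rw [Ideal.mem_bot, sub_eq_zero, add_comm, mul_assoc, ← mul_one_add, ← hu, u.inv_mul]

theorem IsUnit.sub_mul_of_mem_jacobson_bot {b r : R} (hb : IsUnit b) (a : R)
    (hr : r ∈ (⊥ : Ideal R).jacobson) : IsUnit (b - a * r) := by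
  obtain ⟨u, rfl⟩ := hb
  have hfac : (u : R) - a * r = u * (1 + -(↑u⁻¹ * a) * r) := by
    simp [mul_add, ← mul_assoc, sub_eq_add_neg]
  rw [hfac]
  exact u.isUnit.mul (Ideal.mem_jacobson_bot_iff_forall_isUnit_one_add_mul.mp hr _)

theorem Ideal.mem_jacobson_bot_of_forall_isUnit_sub_mul {g h : R} (H : ∀ t, IsUnit (g - h * t)) :
    h ∈ (⊥ : Ideal R).jacobson := by
  obtain ⟨u, rfl⟩ : IsUnit g := by simpa using H 0
  have hk : -(↑u⁻¹ * h) ∈ (⊥ : Ideal R).jacobson := by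
    refine Ideal.mem_jacobson_bot_iff_forall_isUnit_one_add_mul.mpr fun t => ?_
    refine isUnit_one_add_mul_comm ?_
    have hfac : (1 : R) + -(↑u⁻¹ * h) * t = ↑u⁻¹ * (u - h * t) := by
      rw [mul_sub, u.inv_mul, ← mul_assoc, neg_mul, sub_eq_add_neg]
    rw [hfac]
    exact u⁻¹.isUnit.mul (H t)
  have hh : h = -(u * -(↑u⁻¹ * h)) := by simp [← mul_assoc]
  rw [hh]
  exact neg_mem (Ideal.mul_mem_left _ _ hk)

end Jacobson

namespace Matrix

variable {R : Type*} [Ring R]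

theorem isUnit_fin_two_swap : IsUnit !![(0 : R), 1; 1, 0] :=
  isUnit_iff_exists.mpr ⟨!![0, 1; 1, 0], by simp [one_fin_two], by simp [one_fin_two]⟩

theorem isUnit_fin_two_diag {u v : R} (hu : IsUnit u) (hv : IsUnit v) :
    IsUnit !![u, 0; 0, v] := by
  obtain ⟨u, rfl⟩ := hu
  obtain ⟨v, rfl⟩ := hv
  exact isUnit_iff_exists.mpr ⟨!![↑u⁻¹, 0; 0, ↑v⁻¹], by simp [one_fin_two], by simp [one_fin_two]⟩

theorem isUnit_fin_two_swap_rows_iff {a b c d : R} :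
    IsUnit !![c, d; a, b] ↔ IsUnit !![a, b; c, d] := by
  rw [show !![c, d; a, b] = !![0, 1; 1, 0] * !![a, b; c, d] by simp,
    isUnit_fin_two_swap.mul_left_iff]

theorem isUnit_fin_two_swap_cols_iff {a b c d : R} :
    IsUnit !![b, a; d, c] ↔ IsUnit !![a, b; c, d] := by
  rw [show !![b, a; d, c] = !![a, b; c, d] * !![0, 1; 1, 0] by simp,
    isUnit_fin_two_swap.mul_right_iff]

theorem isUnit_fin_two_mul_rows_iff {u v : R} (hu : IsUnit u) (hv : IsUnit v) {a b c d : R} :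
    IsUnit !![u * a, u * b; v * c, v * d] ↔ IsUnit !![a, b; c, d] := by
  rw [show !![u * a, u * b; v * c, v * d] = !![u, 0; 0, v] * !![a, b; c, d] by simp,
    (isUnit_fin_two_diag hu hv).mul_left_iff]

theorem isUnit_fin_two_diag_one_iff {s : R} : IsUnit !![1, 0; 0, s] ↔ IsUnit s := by
  refine ⟨fun h => ?_, isUnit_fin_two_diag isUnit_one⟩
  obtain ⟨N, h₁, h₂⟩ := isUnit_iff_exists.mp h
  have e₁ : s * N 1 1 = 1 := by simpa [mul_apply] using congrFun (congrFun h₁ 1) 1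
  have e₂ : N 1 1 * s = 1 := by simpa [mul_apply] using congrFun (congrFun h₂ 1) 1
  exact isUnit_iff_exists.mpr ⟨_, e₁, e₂⟩

theorem isUnit_fin_two_one_iff {r a b : R} : IsUnit !![1, r; a, b] ↔ IsUnit (b - a * r) := by
  have hL : IsUnit !![(1 : R), 0; a, 1] :=
    isUnit_iff_exists.mpr ⟨!![1, 0; -a, 1], by simp [one_fin_two], by simp [one_fin_two]⟩
  have hU : IsUnit !![(1 : R), r; 0, 1] :=
    isUnit_iff_exists.mpr ⟨!![1, -r; 0, 1], by simp [one_fin_two], by simp [one_fin_two]⟩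
  rw [show !![1, r; a, b] = !![1, 0; a, 1] * !![1, 0; 0, b - a * r] * !![1, r; 0, 1] by simp,
    hU.mul_right_iff, hL.mul_left_iff, isUnit_fin_two_diag_one_iff]

theorem exists_eq_add_of_isUnit_fin_two {a b c d : R} (hM : IsUnit !![a, b; c, d]) (e f : R) :
    ∃ g h, e = g * a + h * c ∧ f = g * b + h * d := by
  obtain ⟨N, -, hNM⟩ := isUnit_iff_exists.mp hM
  obtain ⟨w, hw⟩ : ∃ w, w ᵥ* !![a, b; c, d] = ![e, f] :=
    ⟨![e, f] ᵥ* N, by rw [vecMul_vecMul, hNM, vecMul_one]⟩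
  refine ⟨w 0, w 1, ?_, ?_⟩
  · simpa [vecHead, vecTail] using (congrFun hw 0).symm
  · simpa [vecHead, vecTail] using (congrFun hw 1).symm

end Matrix

section ProjectiveLine

variable {R : Type*} [Ring R]

namespace Admissible

theorem of_isUnit_top {a b c d : R} (h : IsUnit !![a, b; c, d]) : Admissible a b :=
  ⟨_, h, rfl, rfl⟩

theorem of_isUnit_bottom {a b c d : R} (h : IsUnit !![a, b; c, d]) : Admissible c d :=
  of_isUnit_top (isUnit_fin_two_swap_rows_iff.mpr h)

theorem exists_isUnit {a b : R} (h : Admissible a b) : ∃ c d, IsUnit !![a, b; c, d] := by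
  obtain ⟨M, hM, rfl, rfl⟩ := h
  exact ⟨M 1 0, M 1 1, M.eta_fin_two ▸ hM⟩

theorem eq_one_of_mul_left_eq {a b s : R} (h : Admissible a b) (ha : s * a = a) (hb : s * b = b) :
    s = 1 := by
  obtain ⟨c, d, hM⟩ := h.exists_isUnit
  obtain ⟨N, hMN, -⟩ := isUnit_iff_exists.mp hM
  have hrow : a * N 0 0 + b * N 1 0 = 1 := by
    simpa [mul_apply] using congrFun (congrFun hMN 0) 0
  calc s = s * (a * N 0 0 + b * N 1 0) := by rw [hrow, mul_one]
    _ = (s * a) * N 0 0 + (s * b) * N 1 0 := by noncomm_ring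
    _ = 1 := by rw [ha, hb, hrow]

end Admissible

theorem mem_pt_iff {a b c d : R} : ![c, d] ∈ pt R a b ↔ ∃ u, c = u * a ∧ d = u * b := by
  simp [pt, Submodule.mem_span_singleton, funext_iff, Fin.forall_fin_two, eq_comm]

theorem pt_mul_left {u : R} (hu : IsUnit u) (a b : R) : pt R (u * a) (u * b) = pt R a b := by
  rw [pt, show ![u * a, u * b] = u • ![a, b] by simp, Submodule.span_singleton_smul_eq hu, pt]

theorem pt_eq_pt_iff {a b c d : R} (hab : Admissible a b) (hcd : Admissible c d) :
    pt R a b = pt R c d ↔ ∃ u, IsUnit u ∧ c = u * a ∧ d = u * b := by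
  refine ⟨fun h => ?_, fun ⟨u, hu, hc, hd⟩ => by rw [hc, hd, pt_mul_left hu]⟩
  obtain ⟨u, hc, hd⟩ := mem_pt_iff.mp (by rw [h]; exact Submodule.mem_span_singleton_self _)
  obtain ⟨v, ha, hb⟩ := mem_pt_iff.mp (by rw [← h]; exact Submodule.mem_span_singleton_self _)
  refine ⟨u, isUnit_iff_exists.mpr ⟨v, ?_, ?_⟩, hc, hd⟩
  · exact hcd.eq_one_of_mul_left_eq (by rw [mul_assoc, ← ha, ← hc]) (by rw [mul_assoc, ← hb, ← hd])
  · exact hab.eq_one_of_mul_left_eq (by rw [mul_assoc, ← hc, ← ha]) (by rw [mul_assoc, ← hd, ← hb])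

theorem distant_pt_iff {a b c d : R} (hab : Admissible a b) (hcd : Admissible c d) :
    Distant (pt R a b) (pt R c d) ↔ IsUnit !![a, b; c, d] := by
  refine ⟨?_, fun h => ⟨a, b, c, d, rfl, rfl, h⟩⟩
  rintro ⟨a', b', c', d', h₁, h₂, h⟩
  obtain ⟨u, hu, rfl, rfl⟩ := (pt_eq_pt_iff hab (.of_isUnit_top h)).mp h₁
  obtain ⟨v, hv, rfl, rfl⟩ := (pt_eq_pt_iff hcd (.of_isUnit_bottom h)).mp h₂
  exact (isUnit_fin_two_mul_rows_iff hu hv).mp h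

theorem admissible_one_left (r : R) : Admissible 1 r :=
  .of_isUnit_top (c := 0) (d := 1) (isUnit_fin_two_one_iff.mpr (by simp))

theorem radParallel_pt_one_left_of_mem_jacobson_bot {r : R} (hr : r ∈ (⊥ : Ideal R).jacobson) :
    RadParallel (pt R 1 0) (pt R 1 r) := by
  rintro _ ⟨a, b, hab, rfl⟩ hx
  rw [distant_pt_iff hab (admissible_one_left 0), ← isUnit_fin_two_swap_rows_iff,
    isUnit_fin_two_one_iff, mul_zero, sub_zero] at hx
  rw [distant_pt_iff hab (admissible_one_left r), ← isUnit_fin_two_swap_rows_iff,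
    isUnit_fin_two_one_iff]
  exact hx.sub_mul_of_mem_jacobson_bot a hr

theorem RadParallel.isUnit_sub_mul {a b c d g h : R} (hM : IsUnit !![a, b; c, d])
    (hef : Admissible (g * a + h * c) (g * b + h * d))
    (hpq : RadParallel (pt R a b) (pt R (g * a + h * c) (g * b + h * d))) (t : R) :
    IsUnit (g - h * t) := by
  have hx : IsUnit !![t * a + c, t * b + d; a, b] := by
    rw [show !![t * a + c, t * b + d; a, b] = !![t, 1; 1, 0] * !![a, b; c, d] by simp]
    refine IsUnit.mul ?_ hM
    rw [← isUnit_fin_two_swap_cols_iff, isUnit_fin_two_one_iff]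
    simp
  have hdist := hpq _ ⟨_, _, .of_isUnit_top hx, rfl⟩ ((distant_pt_iff (.of_isUnit_top hx)
    (.of_isUnit_bottom hx)).mpr hx)
  rwa [distant_pt_iff (.of_isUnit_top hx) hef,
    show !![t * a + c, t * b + d; g * a + h * c, g * b + h * d] = !![t, 1; g, h] * !![a, b; c, d]
      by simp, hM.mul_right_iff, ← isUnit_fin_two_swap_cols_iff, isUnit_fin_two_one_iff] at hdist

theorem RadParallel.eq_of_jacobson_bot_eq_bot (hJ : (⊥ : Ideal R).jacobson = ⊥) {a b e f : R}
    (hab : Admissible a b) (hef : Admissible e f) (hpq : RadParallel (pt R a b) (pt R e f)) :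
    pt R a b = pt R e f := by
  obtain ⟨c, d, hM⟩ := hab.exists_isUnit
  obtain ⟨g, h, rfl, rfl⟩ := exists_eq_add_of_isUnit_fin_two hM e f
  have hunit := hpq.isUnit_sub_mul hM hef
  obtain rfl : h = 0 := by
    rw [← Ideal.mem_bot, ← hJ]
    exact Ideal.mem_jacobson_bot_of_forall_isUnit_sub_mul hunit
  simpa using (pt_mul_left (by simpa using hunit 0) a b).symm

end ProjectiveLine

theorem radParallel_eq_equality_iff_general (R : Type*) [Ring R] :
    (∀ p ∈ ProjLine R, ∀ q ∈ ProjLine R, (RadParallel p q ↔ p = q)) ↔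
      (⊥ : Ideal R).jacobson = ⊥ := by
  constructor
  · intro H
    refine eq_bot_iff.mpr fun r hr => ?_
    have hpq := (H _ ⟨_, _, admissible_one_left 0, rfl⟩ _ ⟨_, _, admissible_one_left r, rfl⟩).mp
      (radParallel_pt_one_left_of_mem_jacobson_bot hr)
    obtain ⟨u, -, -, rfl⟩ := (pt_eq_pt_iff (admissible_one_left 0) (admissible_one_left r)).mp hpq
    simp
  · rintro hJ _ ⟨a, b, hab, rfl⟩ _ ⟨e, f, hef, rfl⟩
    exact ⟨RadParallel.eq_of_jacobson_bot_eq_bot hJ hab hef, fun h _ _ hx => h ▸ hx⟩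

/-- Radical parallelism is the equality relation on `P(R)` iff the Jacobson radical
of `R` is zero. -/
theorem radParallel_eq_equality_iff (R : Type*) [Ring R] [Nontrivial R] :
    (∀ p ∈ ProjLine R, ∀ q ∈ ProjLine R, (RadParallel p q ↔ p = q)) ↔
      (⊥ : Ideal R).jacobson = ⊥ :=
  radParallel_eq_equality_iff_general R
end

section
/- Let R be a K-algebra over a field K with more than 2 elements, and let b ∈ rad R be nonzero. Then the map β' : R → R, z ↦ (1 − zb)⁻¹ z (well-defined since 1 − zb is a unit for all z) is bijective but not a K-affine transformation: there exists k ∈ K \ {0,1} such that 0, (1−b)⁻¹, and (1−kb)⁻¹ k are not collinear in the K-vector space R, because 1−b and 1−kb are K-linearly independent. -/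
/-!
As `b` lies in the Jacobson radical, every `1 - z b` is a unit, and `z ↦ (1 + z b)⁻¹ z`
inverts `β'`. A nonzero element of the radical is not a unit, hence not a scalar, so `1 - b` and
`1 - k b` are linearly independent for `k ≠ 1`. Multiplying by `1 - k b` on the left and by
`1 - b` on the right carries this over to `β'(1) = (1 - b)⁻¹` and `β'(k) = (1 - k b)⁻¹ k`
when `k ≠ 0`; so these do not lie on a line through `β'(0) = 0`, whereas an affine map
would send `k` to `k β'(1)`.
-/

section Jacobson

variable {R : Type*} [Ring R]

theorem Ideal.isUnit_one_add_of_mem_jacobson_bot {x : R} (hx : x ∈ (⊥ : Ideal R).jacobson) :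
    IsUnit (1 + x) := by
  have exists_leftInv : ∀ y ∈ (⊥ : Ideal R).jacobson, ∃ s, s * (1 + y) = 1 := fun y hy => by
    obtain ⟨s, hs⟩ := exists_mul_add_sub_mem_of_mem_jacobson y hy
    exact ⟨s, by rwa [mem_bot, sub_eq_zero, add_comm] at hs⟩
  obtain ⟨s, hs⟩ := exists_leftInv x hx
  -- `s = 1 - s * x` again has a left inverse `t`, and `t = 1 + x` since `s * (1 + x) = 1`.
  have hs_eq : s = 1 + -(s * x) := by rw [← hs]; noncomm_ring
  obtain ⟨t, ht⟩ := exists_leftInv _ (neg_mem (mul_mem_left _ s hx))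
  rw [← hs_eq, left_inv_eq_right_inv ht hs] at ht
  exact isUnit_iff_exists_and_exists.2 ⟨⟨s, ht⟩, ⟨s, hs⟩⟩

theorem Ideal.isUnit_one_sub_mul_of_mem_jacobson_bot {b : R} (hb : b ∈ (⊥ : Ideal R).jacobson)
    (z : R) : IsUnit (1 - z * b) := by
  simpa [sub_eq_add_neg] using isUnit_one_add_of_mem_jacobson_bot (neg_mem (mul_mem_left _ z hb))

theorem Ideal.not_isUnit_of_mem_jacobson_bot [Nontrivial R] {b : R}
    (hb : b ∈ (⊥ : Ideal R).jacobson) : ¬IsUnit b := fun hu =>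
  bot_ne_top (jacobson_eq_top_iff.1 (eq_top_of_isUnit_mem _ hb hu))

end Jacobson

section Moebius

variable {R : Type*} [Ring R]

/-- The paper's `β'`; note that `Ring.inverse` is `0` on non-units. -/
noncomputable def moebius (b z : R) : R := Ring.inverse (1 - z * b) * z

@[simp]
theorem moebius_zero_right (b : R) : moebius b 0 = 0 := mul_zero _

@[simp]
theorem moebius_one_right (b : R) : moebius b 1 = Ring.inverse (1 - b) := by
  simp [moebius]

theorem moebius_neg_moebius {b z : R} (h : IsUnit (1 - z * b)) :
    moebius (-b) (moebius b z) = z := by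
  have hden : 1 - moebius b z * -b = Ring.inverse (1 - z * b) := by
    calc 1 - moebius b z * -b
        = Ring.inverse (1 - z * b) * (1 - z * b) + Ring.inverse (1 - z * b) * (z * b) := by
          rw [Ring.inverse_mul_cancel _ h, moebius]; noncomm_ring
      _ = Ring.inverse (1 - z * b) := by rw [← mul_add, sub_add_cancel, mul_one]
  rw [moebius, hden, Ring.inverse_inverse h, moebius, Ring.mul_inverse_cancel_left _ _ h]

theorem moebius_bijective {b : R} (hb : b ∈ (⊥ : Ideal R).jacobson) :
    Function.Bijective (moebius b) := by
  refine Function.bijective_iff_has_inverse.2 ⟨moebius (-b), fun z => ?_, fun z => ?_⟩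
  · exact moebius_neg_moebius (Ideal.isUnit_one_sub_mul_of_mem_jacobson_bot hb z)
  · simpa using moebius_neg_moebius
      (Ideal.isUnit_one_sub_mul_of_mem_jacobson_bot (neg_mem hb) z)

end Moebius

theorem not_collinear_zero_of_linearIndependent {K V : Type*} [Field K] [AddCommGroup V]
    [Module K V] {p q : V} (h : LinearIndependent K ![p, q]) :
    ¬Collinear K ({0, p, q} : Set V) := by
  rw [collinear_iff_of_mem (Set.mem_insert _ _)]
  rintro ⟨v, hv⟩
  obtain ⟨r, hr⟩ := hv p (by simp)
  obtain ⟨s, hs⟩ := hv q (by simp)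
  rw [vadd_eq_add, add_zero] at hr hs
  have hcomb : s • p + (-r) • q = 0 := by rw [hr, hs]; module
  obtain ⟨rfl, -⟩ := LinearIndependent.pair_iff.1 h s (-r) hcomb
  exact h.ne_zero 1 (by simpa using hs)

section Algebra

variable {K R : Type*} [Field K] [Ring R] [Algebra K R]

theorem notMem_range_algebraMap_of_mem_jacobson_bot [Nontrivial R] {b : R}
    (hb : b ∈ (⊥ : Ideal R).jacobson) (hb0 : b ≠ 0) : b ∉ Set.range (algebraMap K R) := by
  rintro ⟨c, rfl⟩
  have hc : c ≠ 0 := by rintro rfl; exact hb0 (map_zero _)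
  exact Ideal.not_isUnit_of_mem_jacobson_bot hb (hc.isUnit.map _)

theorem linearIndependent_one_sub_pair [Nontrivial R] {b : R}
    (hb : b ∉ Set.range (algebraMap K R)) {k : K} (hk : k ≠ 1) :
    LinearIndependent K ![1 - b, 1 - algebraMap K R k * b] := by
  have hb1 : (1 : R) - b ≠ 0 := fun h => hb ⟨1, by rw [map_one, ← sub_eq_zero.1 h]⟩
  refine (LinearIndependent.pair_iff' hb1).2 fun a ha => ?_
  have hscalar : algebraMap K R (a - 1) = algebraMap K R (a - k) * b := by
    rw [Algebra.smul_def] at ha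
    simp only [map_sub, map_one]
    linear_combination (norm := noncomm_ring) ha
  by_cases hak : a - k = 0
  · rw [hak, map_zero, zero_mul, map_eq_zero] at hscalar
    exact hk (by linear_combination hscalar - hak)
  · refine hb ⟨(a - k)⁻¹ * (a - 1), ?_⟩
    rw [map_mul, hscalar, ← mul_assoc, ← map_mul, inv_mul_cancel₀ hak, map_one, one_mul]

theorem linearIndependent_moebius_one_algebraMap [Nontrivial R] {b : R}
    (hb : b ∈ (⊥ : Ideal R).jacobson) (hb0 : b ≠ 0) {k : K} (hk0 : k ≠ 0) (hk1 : k ≠ 1) :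
    LinearIndependent K ![moebius b 1, moebius b (algebraMap K R k)] := by
  have hu1 : IsUnit (1 - b) := by simpa using Ideal.isUnit_one_sub_mul_of_mem_jacobson_bot hb 1
  have huk := Ideal.isUnit_one_sub_mul_of_mem_jacobson_bot hb (algebraMap K R k)
  refine (LinearIndependent.pair_iff' ?_).2 fun a ha => hk0 ?_
  · simpa using (Ring.isUnit_iff_inverse_ne_zero.1 hu1)
  -- Clearing both denominators turns `a • β'(1) = β'(k)` into `a • (1 - k b) = k • (1 - b)`.
  have hcleared : k • (1 - b) + (-a) • (1 - algebraMap K R k * b) = 0 := by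
    have := congrArg (fun x => (1 - algebraMap K R k * b) * x * (1 - b)) ha
    simp only [moebius, one_mul, mul_one, mul_smul_comm, smul_mul_assoc, mul_assoc,
      Ring.inverse_mul_cancel _ hu1, Ring.mul_inverse_cancel_left _ _ huk] at this
    rw [Algebra.smul_def, ← this, neg_smul, add_neg_cancel]
  exact (LinearIndependent.pair_iff.1
    (linearIndependent_one_sub_pair (notMem_range_algebraMap_of_mem_jacobson_bot hb hb0) hk1)
    k (-a) hcleared).1

theorem not_exists_linearMap_eq_add_of_linearIndependent {A M : Type*} [Ring A] [Algebra K A]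
    [AddCommGroup M] [Module K M] {g : A → M} (hg0 : g 0 = 0) {k : K}
    (h : LinearIndependent K ![g 1, g (algebraMap K A k)]) :
    ¬∃ (f : A →ₗ[K] M) (v : M), ∀ z, g z = f z + v := by
  rintro ⟨f, v, hf⟩
  have hv : v = 0 := by simpa [hg0, eq_comm] using hf 0
  have hgk : g (algebraMap K A k) = k • g 1 := by
    rw [hf, hf, hv, add_zero, add_zero, Algebra.algebraMap_eq_smul_one, map_smul]
  exact (LinearIndependent.pair_iff' (by simpa using h.ne_zero 0)).1 h k hgk.symm

end Algebra

theorem nonaffine_bijection_general (K : Type*) [Field K] (R : Type*) [Ring R] [Algebra K R]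
    (hK : 2 < Cardinal.mk K)
    (b : R) (hb : b ∈ (⊥ : Ideal R).jacobson) (hb0 : b ≠ 0) :
    Function.Bijective (fun z : R => Ring.inverse (1 - z * b) * z) ∧
      ¬ (∃ (f : R →ₗ[K] R) (v : R), ∀ z : R,
          Ring.inverse (1 - z * b) * z = f z + v) ∧
      ∃ k : K, k ≠ 0 ∧ k ≠ 1 ∧
        LinearIndependent K ![1 - b, 1 - algebraMap K R k * b] ∧
        ¬ Collinear K ({0, Ring.inverse (1 - b),
            Ring.inverse (1 - algebraMap K R k * b) * algebraMap K R k} : Set R) := by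
  have : Nontrivial R := nontrivial_of_ne b 0 hb0
  obtain ⟨k, hk0, hk1⟩ := Cardinal.exists_ne_ne_of_three_le
    (by simpa [two_add_one_eq_three] using Cardinal.natCast_add_one_le_iff.2 hK) (0 : K) 1
  have hli := linearIndependent_moebius_one_algebraMap hb hb0 hk0 hk1
  refine ⟨moebius_bijective hb,
    not_exists_linearMap_eq_add_of_linearIndependent (moebius_zero_right b) hli, k, hk0, hk1,
    linearIndependent_one_sub_pair (notMem_range_algebraMap_of_mem_jacobson_bot hb hb0) hk1, ?_⟩
  simpa [moebius] using not_collinear_zero_of_linearIndependent hli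

/-- Let `R` be an algebra over a field `K` with more than two elements (`K` lying in the
centre of `R`, `K ≠ R`), and let `b ∈ rad R` be nonzero. Then the map
`β' : R → R, z ↦ (1 - zb)⁻¹ z` (well defined since `1 - zb` is a unit for all `z`,
the inverse being realized by `Ring.inverse`) is bijective but not a `K`-affine
transformation: there is `k ∈ K \ {0,1}` such that the three image points
`0`, `(1-b)⁻¹`, `(1-kb)⁻¹k` of `0, 1, k ∈ K` are not collinear over `K`, because
`1 - b` and `1 - kb` are `K`-linearly independent. -/
theorem nonaffine_bijection (K : Type*) [Field K] (R : Type*) [Ring R] [Nontrivial R]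
    [Algebra K R] (hKR : ¬ Function.Surjective (algebraMap K R))
    (hK : 2 < Cardinal.mk K)
    (b : R) (hb : b ∈ (⊥ : Ideal R).jacobson) (hb0 : b ≠ 0) :
    Function.Bijective (fun z : R => Ring.inverse (1 - z * b) * z) ∧
      ¬ (∃ (f : R →ₗ[K] R) (v : R), ∀ z : R,
          Ring.inverse (1 - z * b) * z = f z + v) ∧
      ∃ k : K, k ≠ 0 ∧ k ≠ 1 ∧
        LinearIndependent K ![1 - b, 1 - algebraMap K R k * b] ∧
        ¬ Collinear K ({0, Ring.inverse (1 - b),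
            Ring.inverse (1 - algebraMap K R k * b) * algebraMap K R k} : Set R) :=
  nonaffine_bijection_general K R hK b hb hb0
end
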